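/- Let G be a connected graph with connected complement of diameter 2. Then Sd_s(G,G^c) ≥ max{dim_s(G) + β̊(G), β(G)}, where β̊(G) is the vertex cover number of the interior subgraph of G (the subgraph induced by the non-boundary vertices, defined as 0 when V(G)=∂(G)). -/

import Mathlib

open SimpleGraph

variable {V : Type*}

/-- `w` strongly resolves `u` and `v` in `G`. -/
def StronglyResolves (G : SimpleGraph V) (w u v : V) : Prop :=
  G.dist u w = G.dist u v + G.dist v w ∨ G.dist v w = G.dist v u + G.dist u w

/-- `S` is a strong metric generator for `G`. -/
def IsStrongMetricGen (G : SimpleGraph V) (S : Set V) : Prop :=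
  ∀ u v : V, u ≠ v → ∃ w ∈ S, StronglyResolves G w u v

/-- The simultaneous strong metric dimension of a family of graphs. -/
noncomputable def SdS (𝒢 : Set (SimpleGraph V)) : ℕ :=
  sInf {n | ∃ S : Set V, S.ncard = n ∧ ∀ G ∈ 𝒢, IsStrongMetricGen G S}

/-- The strong metric dimension of a single graph. -/
noncomputable def sdim (G : SimpleGraph V) : ℕ := SdS {G}

/-- `u` is maximally distant from `v` in `G`. -/
def MaxDistantFrom (G : SimpleGraph V) (u v : V) : Prop :=
  ∀ w : V, G.Adj u w → G.dist v w ≤ G.dist v u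

/-- `u` and `v` are mutually maximally distant in `G`. -/
def MutuallyMaxDistant (G : SimpleGraph V) (u v : V) : Prop :=
  MaxDistantFrom G u v ∧ MaxDistantFrom G v u

/-- The strong resolving graph of `G`. -/
def SRG (G : SimpleGraph V) : SimpleGraph V where
  Adj u v := u ≠ v ∧ MutuallyMaxDistant G u v
  symm := by
    constructor
    intro u v h
    exact ⟨h.1.symm, h.2.2, h.2.1⟩
  loopless := by constructor; intro u h; exact h.1 rfl

/-- The boundary of `G`: vertices mutually maximally distant from some vertex. -/
def Boundary (G : SimpleGraph V) : Set V :=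
  {u | ∃ v, MutuallyMaxDistant G u v}

/-- `S` is a vertex cover of `G`. -/
def IsVertexCover (G : SimpleGraph V) (S : Set V) : Prop :=
  ∀ u v : V, G.Adj u v → u ∈ S ∨ v ∈ S

/-- The vertex cover number. -/
noncomputable def vcNum (G : SimpleGraph V) : ℕ :=
  sInf {n | ∃ S : Set V, S.ncard = n ∧ _root_.IsVertexCover G S}

/-- A strong resolving cover: simultaneously a vertex cover and a strong metric generator. -/
def IsStrongResCover (G : SimpleGraph V) (S : Set V) : Prop :=
  _root_.IsVertexCover G S ∧ IsStrongMetricGen G S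

/-- The strong resolving cover number `β_s`. -/
noncomputable def betaS (G : SimpleGraph V) : ℕ :=
  sInf {n | ∃ S : Set V, S.ncard = n ∧ IsStrongResCover G S}

/-- `G` is 2-antipodal. -/
def TwoAntipodal (G : SimpleGraph V) : Prop :=
  ∀ x : V, ∃! y : V, G.dist x y = G.diam

/-- `v` is a leaf of `G` (degree one). -/
def IsLeaf (G : SimpleGraph V) (v : V) : Prop := ∃! w : V, G.Adj v w
open Classical

/-- The vertex cover number of the interior subgraph of `G`. -/

noncomputable def intBeta (G : SimpleGraph V) : ℕ :=
  if Boundary G = Set.univ then 0 else vcNum (G.induce (Boundary G)ᶜ)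

/-!
A vertex strongly resolving a mutually maximally distant pair must be one of the two vertices,
and conversely every pair is strongly resolved by some mutually maximally distant pair lying
"beyond" it; hence the strong metric generators of a connected graph are exactly the vertex covers
of its strong resolving graph. Let `S` be a strong metric generator of both `G` and `Gᶜ`. The edges
of the strong resolving graph of `G` join boundary vertices, so `S ∩ ∂(G)` already generates `G`.
Since `Gᶜ` has diameter `2`, every edge of `G` joins two vertices at distance `2 = diam Gᶜ` in `Gᶜ`,
which are mutually maximally distant there; so `S` is a vertex cover of `G`, and `S ∖ ∂(G)` covers
the interior subgraph.
-/

section StrongResolvingGraph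

variable {G : SimpleGraph V} {S : Set V}

lemma SimpleGraph.Connected.exists_adj_dist_add_one (hG : G.Connected) {v w : V} (h : v ≠ w) :
    ∃ x, G.Adj v x ∧ G.dist x w + 1 = G.dist v w := by
  obtain ⟨p, hp⟩ := hG.exists_walk_length_eq_dist v w
  cases p with
  | nil => exact absurd rfl h
  | @cons _ x _ hvx q =>
    refine ⟨x, hvx, ?_⟩
    have hxw : G.dist x w ≤ q.length := dist_le q
    have htri : G.dist v w ≤ G.dist v x + G.dist x w := hG.dist_triangle
    rw [dist_eq_one_iff_adj.mpr hvx] at htri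
    simp only [Walk.length_cons] at hp
    omega

lemma MaxDistantFrom.eq_of_dist_eq_add (hG : G.Connected) {u v w : V}
    (hm : MaxDistantFrom G v u) (hr : G.dist u w = G.dist u v + G.dist v w) : w = v := by
  by_contra hwv
  obtain ⟨x, hvx, hx⟩ := hG.exists_adj_dist_add_one (Ne.symm hwv)
  have htri : G.dist u w ≤ G.dist u x + G.dist x w := hG.dist_triangle
  have hux : G.dist u x ≤ G.dist u v := hm x hvx
  omega

lemma MutuallyMaxDistant.eq_or_eq_of_stronglyResolves (hG : G.Connected) {u v w : V}
    (hm : MutuallyMaxDistant G u v) (hr : StronglyResolves G w u v) : w = u ∨ w = v :=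
  hr.elim (fun h => .inr (hm.2.eq_of_dist_eq_add hG h))
    (fun h => .inl (hm.1.eq_of_dist_eq_add hG h))

lemma mutuallyMaxDistant_of_dist_eq_diam (hG : G.ediam ≠ ⊤) {u v : V}
    (huv : G.dist u v = G.diam) : MutuallyMaxDistant G u v := by
  refine ⟨fun w _ => ?_, fun w _ => ?_⟩
  · exact (dist_le_diam hG).trans_eq (by rw [dist_comm, huv])
  · exact (dist_le_diam hG).trans_eq huv.symm

lemma exists_maxDistantFrom_dist_eq_add [Finite V] (hG : G.Connected) (v u : V) :
    ∃ u', MaxDistantFrom G u' v ∧ G.dist v u' = G.dist v u + G.dist u u' := by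
  obtain ⟨u', hu', hmax⟩ := Set.exists_max_image {x | G.dist v x = G.dist v u + G.dist u x}
    (G.dist v) (Set.toFinite _) ⟨u, by simp⟩
  refine ⟨u', fun w hadj => ?_, hu'⟩
  by_contra! hlt
  have hu'w : G.dist u' w = 1 := dist_eq_one_iff_adj.mpr hadj
  have h₁ : G.dist v w ≤ G.dist v u' + G.dist u' w := hG.dist_triangle
  have h₂ : G.dist u w ≤ G.dist u u' + G.dist u' w := hG.dist_triangle
  have h₃ : G.dist v w ≤ G.dist v u + G.dist u w := hG.dist_triangle
  have hu'eq : G.dist v u' = G.dist v u + G.dist u u' := hu'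
  have hw : G.dist v w = G.dist v u + G.dist u w := by omega
  have := hmax w hw
  omega

lemma IsStrongMetricGen.isVertexCover_SRG (hG : G.Connected) (hS : IsStrongMetricGen G S) :
    _root_.IsVertexCover (SRG G) S := by
  intro u v huv
  obtain ⟨w, hwS, hres⟩ := hS u v huv.1
  rcases huv.2.eq_or_eq_of_stronglyResolves hG hres with rfl | rfl
  · exact .inl hwS
  · exact .inr hwS

lemma isStrongMetricGen_of_isVertexCover_SRG [Finite V] (hG : G.Connected)
    (hS : _root_.IsVertexCover (SRG G) S) : IsStrongMetricGen G S := by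
  intro u v huv
  -- `u'` and `v'` are mutually maximally distant and `u' ⤳ u ⤳ v ⤳ v'` is a geodesic.
  obtain ⟨u', hu'v, hvu'⟩ := exists_maxDistantFrom_dist_eq_add hG v u
  obtain ⟨v', hv'u', hu'v'⟩ := exists_maxDistantFrom_dist_eq_add hG u' v
  have hu'v'_comm : G.dist v' u' = G.dist u' v' := dist_comm
  have hvu'_comm : G.dist u' v = G.dist v u' := dist_comm
  have hu'v'_max : MaxDistantFrom G u' v' := by
    intro w hadj
    have htri : G.dist v' w ≤ G.dist v' v + G.dist v w := hG.dist_triangle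
    have hvw : G.dist v w ≤ G.dist v u' := hu'v w hadj
    have hvv' : G.dist v' v = G.dist v v' := dist_comm
    omega
  have hne : u' ≠ v' := by
    rintro rfl
    rw [SimpleGraph.dist_self] at hu'v'
    exact huv.symm (hG.dist_eq_zero_iff.mp (by omega))
  rcases hS u' v' ⟨hne, hu'v'_max, hv'u'⟩ with hmem | hmem
  · exact ⟨u', hmem, .inr hvu'⟩
  · refine ⟨v', hmem, .inl ?_⟩
    have h₁ : G.dist u' v' ≤ G.dist u' u + G.dist u v' := hG.dist_triangle
    have h₂ : G.dist u v' ≤ G.dist u v + G.dist v v' := hG.dist_triangle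
    have huu' : G.dist u' u = G.dist u u' := dist_comm
    have huv_comm : G.dist u v = G.dist v u := dist_comm
    omega

lemma isStrongMetricGen_univ (G : SimpleGraph V) : IsStrongMetricGen G Set.univ :=
  fun _ v _ => ⟨v, trivial, .inl (by rw [dist_self, add_zero])⟩

lemma sdim_le_ncard (hS : IsStrongMetricGen G S) : sdim G ≤ S.ncard :=
  Nat.sInf_le ⟨S, rfl, fun _ hH => (Set.mem_singleton_iff.mp hH) ▸ hS⟩

lemma vcNum_le_ncard (hS : _root_.IsVertexCover G S) : vcNum G ≤ S.ncard :=
  Nat.sInf_le ⟨S, rfl, hS⟩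

lemma IsVertexCover.inter_boundary (hS : _root_.IsVertexCover (SRG G) S) :
    _root_.IsVertexCover (SRG G) (S ∩ Boundary G) := by
  intro u v huv
  rcases hS u v huv with hu | hv
  · exact .inl ⟨hu, v, huv.2⟩
  · exact .inr ⟨hv, u, huv.2.2, huv.2.1⟩

lemma intBeta_le_ncard_inter_compl_boundary (hS : _root_.IsVertexCover G S) :
    intBeta G ≤ (S ∩ (Boundary G)ᶜ).ncard := by
  unfold intBeta
  split_ifs
  · exact Nat.zero_le _
  · have hcover : _root_.IsVertexCover (G.induce (Boundary G)ᶜ) (Subtype.val ⁻¹' S) :=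
      fun x y hxy => hS x y hxy
    refine (vcNum_le_ncard hcover).trans_eq ?_
    rw [← Set.ncard_image_of_injective _ Subtype.coe_injective,
      Set.image_preimage_eq_inter_range, Subtype.range_coe]

lemma sdim_add_intBeta_le_ncard [Finite V] (hG : G.Connected) (hS : IsStrongMetricGen G S)
    (hcover : _root_.IsVertexCover G S) : sdim G + intBeta G ≤ S.ncard := by
  have hboundary : IsStrongMetricGen G (S ∩ Boundary G) :=
    isStrongMetricGen_of_isVertexCover_SRG hG (hS.isVertexCover_SRG hG).inter_boundary
  calc sdim G + intBeta G
      ≤ (S ∩ Boundary G).ncard + (S ∩ (Boundary G)ᶜ).ncard :=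
        Nat.add_le_add (sdim_le_ncard hboundary) (intBeta_le_ncard_inter_compl_boundary hcover)
    _ = S.ncard := Set.ncard_inter_add_ncard_sdiff_eq_ncard S (Boundary G) ▸ rfl

lemma adj_SRG_compl_of_adj (hGc : Gᶜ.Connected) (hd : Gᶜ.diam = 2) {u v : V} (huv : G.Adj u v) :
    (SRG Gᶜ).Adj u v := by
  have hfin : Gᶜ.ediam ≠ ⊤ := ediam_ne_top_of_diam_ne_zero (by omega)
  have hlt : 1 < Gᶜ.dist u v := hGc.one_lt_dist_of_ne_of_not_adj huv.ne fun h => h.2 huv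
  have hle : Gᶜ.dist u v ≤ Gᶜ.diam := dist_le_diam hfin
  exact ⟨huv.ne, mutuallyMaxDistant_of_dist_eq_diam hfin (by omega)⟩

lemma isVertexCover_of_isStrongMetricGen_compl (hGc : Gᶜ.Connected) (hd : Gᶜ.diam = 2)
    (hS : IsStrongMetricGen Gᶜ S) : _root_.IsVertexCover G S :=
  fun u v huv => hS.isVertexCover_SRG hGc u v (adj_SRG_compl_of_adj hGc hd huv)

end StrongResolvingGraph

theorem stmt14 [Fintype V] (G : SimpleGraph V) (hG : G.Connected) (hGc : Gᶜ.Connected)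
    (hd : Gᶜ.diam = 2) :
    max (sdim G + intBeta G) (vcNum G) ≤ SdS {G, Gᶜ} := by
  refine le_csInf ⟨_, Set.univ, rfl, fun H _ => isStrongMetricGen_univ H⟩ ?_
  rintro n ⟨S, rfl, hS⟩
  have hcover := isVertexCover_of_isStrongMetricGen_compl hGc hd (hS Gᶜ (by simp))
  exact max_le (sdim_add_intBeta_le_ncard hG (hS G (by simp)) hcover) (vcNum_le_ncard hcover)
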